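/- arXiv:1709.09463 — 2 statements merged into one kernel-verified Lean document; each statement's English description precedes it below -/
import Mathlib

section
/- Let C₁ and C₂ be vertex-disjoint graphs, each 2-regular, where C₂ is a finite cycle, and let e₁ = (a,b) ∈ E(C₁), e₂ = (c,d) ∈ E(C₂). Then the graph (C₁ ∪ C₂) − {e₁, e₂} + {(a,c), (b,d)} is connected, 2-regular, and has vertex set V(C₁) ∪ V(C₂). -/
/-- Every vertex in the support of `H` has exactly two neighbours. -/
def TwoRegularOn {V : Type*} (H : SimpleGraph V) : Prop :=
  ∀ v ∈ H.support, (H.neighborSet v).ncard = 2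

/-- Any two vertices in the support of `H` are joined by a path in `H`. -/
def ConnectedOn {V : Type*} (H : SimpleGraph V) : Prop :=
  ∀ u ∈ H.support, ∀ v ∈ H.support, H.Reachable u v

/-- A finite cycle: a nonempty, finite, connected, 2-regular graph (on its support). -/
def IsFiniteCycleGraph {V : Type*} (H : SimpleGraph V) : Prop :=
  H.support.Nonempty ∧ H.support.Finite ∧ ConnectedOn H ∧ TwoRegularOn H

/-
Switching the edges `ab`, `cd` for `ac`, `bd` changes no neighbourhood size, so the vertex set and
2-regularity survive. For connectivity: deleting `cd` from the finite cycle `C₂` still leaves a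
path from `c` to `d`, and after deleting `ab` every vertex of `C₁` still reaches `a` or `b`, and
every vertex of `C₂` reaches `c` or `d`; the new edges `ac`, `bd` join all of these to `a`.
-/

namespace SimpleGraph

variable {V : Type*} {G H : SimpleGraph V} {a b c d u v w : V}

lemma support_sup (G H : SimpleGraph V) : (G ⊔ H).support = G.support ∪ H.support := by
  ext v
  simp only [mem_support, sup_adj, exists_or, Set.mem_union]

lemma neighborSet_sup_of_notMem_support (hv : v ∉ H.support) :
    (G ⊔ H).neighborSet v = G.neighborSet v := by
  have hH : H.neighborSet v = ∅ := Set.eq_empty_of_forall_notMem fun w hw => hv ⟨w, hw⟩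
  rw [neighborSet_sup, hH, Set.union_empty]

lemma deleteEdges_le_sup_deleteEdges (ha : a ∉ H.support) :
    H.deleteEdges {s(c, d)} ≤ (G ⊔ H).deleteEdges {s(a, b), s(c, d)} := by
  intro u v huv
  obtain ⟨huv, hne⟩ := (deleteEdges_adj ..).mp huv
  refine (deleteEdges_adj ..).mpr ⟨Or.inr huv, ?_⟩
  rintro (h | h)
  · rcases Sym2.mem_iff.mp (h ▸ Sym2.mem_mk_left a b) with rfl | rfl
    exacts [ha huv.mem_support_left, ha huv.mem_support_right]
  · exact hne h

lemma ncard_neighborSet_induce_of_forall_adj {s : Set V} (hs : ∀ v ∈ s, ∀ w, G.Adj v w → w ∈ s)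
    (v : s) : ((G.induce s).neighborSet v).ncard = (G.neighborSet v).ncard :=
  Set.ncard_preimage_of_injective_subset_range Subtype.val_injective
    fun w hw => ⟨⟨w, hs v v.2 w hw⟩, rfl⟩

lemma isCycles_iff_twoRegularOn : G.IsCycles ↔ TwoRegularOn G := by
  simp only [IsCycles, TwoRegularOn, nonempty_neighborSet, mem_support]

lemma IsCycles.induce_support (hG : G.IsCycles) : (G.induce G.support).IsCycles := fun v _ => by
  rw [ncard_neighborSet_induce_of_forall_adj fun _ _ _ h => h.mem_support_right]
  exact hG (nonempty_neighborSet.mpr v.2)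

lemma IsCycles.reachable_deleteEdges_of_finite_support (hG : G.IsCycles) (hfin : G.support.Finite)
    (hvw : G.Adj v w) : (G.deleteEdges {s(v, w)}).Reachable v w := by
  have : Finite G.support := hfin
  let v' : G.support := ⟨v, hvw.mem_support_left⟩
  let w' : G.support := ⟨w, hvw.mem_support_right⟩
  have hedge (x y : G.support) (h : s(x.1, y.1) = s(v, w)) : s(x, y) = s(v', w') := by
    simpa only [Sym2.eq_iff, Subtype.ext_iff] using h
  let φ : (G.induce G.support).deleteEdges {s(v', w')} →g G.deleteEdges {s(v, w)} :=
    ⟨Subtype.val, fun {x y} h => by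
      rw [deleteEdges_adj] at h ⊢
      exact ⟨h.1, fun hxy => h.2 (hedge x y hxy)⟩⟩
  exact (hG.induce_support.reachable_deleteEdges (v := v') (w := w') hvw).map φ

lemma Walk.reachable_deleteEdges_or (s : Set (Sym2 V)) (p : G.Walk u v) :
    (G.deleteEdges s).Reachable u v ∨ ∃ e ∈ s, ∃ z ∈ e, (G.deleteEdges s).Reachable u z := by
  induction p with
  | nil => exact Or.inl .rfl
  | @cons u w v h p ih =>
    by_cases hs : s(u, w) ∈ s
    · exact Or.inr ⟨_, hs, u, Sym2.mem_mk_left u w, .rfl⟩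
    · have huw : (G.deleteEdges s).Adj u w := (deleteEdges_adj ..).mpr ⟨h, hs⟩
      exact ih.imp huw.reachable.trans
        fun ⟨e, he, z, hz, hwz⟩ => ⟨e, he, z, hz, huw.reachable.trans hwz⟩

def switch (G : SimpleGraph V) (a b c d : V) : SimpleGraph V :=
  G.deleteEdges {s(a, b), s(c, d)} ⊔ fromEdgeSet {s(a, c), s(b, d)}

lemma switch_comm : G.switch a b c d = G.switch c d a b := by
  simp only [switch, Set.pair_comm, Sym2.eq_swap]

lemma switch_swap : G.switch a b c d = G.switch b a d c := by
  simp only [switch, Set.pair_comm, Sym2.eq_swap]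

lemma switch_adj_left (hac : a ≠ c) : (G.switch a b c d).Adj a c :=
  Or.inr ⟨Or.inl rfl, hac⟩

lemma switch_adj_right (hbd : b ≠ d) : (G.switch a b c d).Adj b d :=
  Or.inr ⟨Or.inr rfl, hbd⟩

lemma neighborSet_switch_left (hab : G.Adj a b) (hcd : G.Adj c d) (hac : ¬G.Adj a c)
    (hac' : a ≠ c) : (G.switch a b c d).neighborSet a = insert c (G.neighborSet a \ {b}) := by
  have had : a ≠ d := by rintro rfl; exact hac hcd.symm
  ext w
  simp only [switch, mem_neighborSet, sup_adj, deleteEdges_adj, fromEdgeSet_adj,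
    Set.mem_insert_iff, Set.mem_singleton_iff, Set.mem_sdiff, Sym2.eq_iff]
  grind [hab.ne]

lemma neighborSet_switch_of_ne (ha : v ≠ a) (hb : v ≠ b) (hc : v ≠ c) (hd : v ≠ d) :
    (G.switch a b c d).neighborSet v = G.neighborSet v := by
  ext w
  simp [switch, ha, hb, hc, hd]

section Switch

variable (hab : G.Adj a b) (hcd : G.Adj c d) (hac : ¬G.Adj a c) (hbd : ¬G.Adj b d)
  (hac' : a ≠ c) (hbd' : b ≠ d)
include hab hcd hac hbd hac' hbd'

lemma neighborSet_switch_eq_or (v : V) :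
    (G.switch a b c d).neighborSet v = G.neighborSet v ∨
      ∃ x ∈ G.neighborSet v, ∃ y ∉ G.neighborSet v,
        (G.switch a b c d).neighborSet v = insert y (G.neighborSet v \ {x}) := by
  by_cases hv : v = a ∨ v = b ∨ v = c ∨ v = d
  · right
    rcases hv with rfl | rfl | rfl | rfl
    · exact ⟨b, hab, c, hac, neighborSet_switch_left hab hcd hac hac'⟩
    · exact ⟨a, hab.symm, d, hbd, switch_swap ▸
        neighborSet_switch_left hab.symm hcd.symm hbd hbd'⟩
    · exact ⟨d, hcd, a, fun h => hac h.symm, switch_comm ▸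
        neighborSet_switch_left hcd hab (fun h => hac h.symm) hac'.symm⟩
    · exact ⟨c, hcd.symm, b, fun h => hbd h.symm, (switch_comm.trans switch_swap) ▸
        neighborSet_switch_left hcd.symm hab.symm (fun h => hbd h.symm) hbd'.symm⟩
  · obtain ⟨ha, hb, hc, hd⟩ : v ≠ a ∧ v ≠ b ∧ v ≠ c ∧ v ≠ d := by simpa only [not_or] using hv
    exact Or.inl (neighborSet_switch_of_ne ha hb hc hd)

lemma ncard_neighborSet_switch (v : V) :
    ((G.switch a b c d).neighborSet v).ncard = (G.neighborSet v).ncard := by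
  rcases neighborSet_switch_eq_or hab hcd hac hbd hac' hbd' v with h | ⟨x, hx, y, hy, h⟩
  · rw [h]
  · rw [h, Set.ncard_exchange hy hx]

lemma support_switch : (G.switch a b c d).support = G.support := by
  ext v
  rw [mem_support, mem_support, ← nonempty_neighborSet, ← nonempty_neighborSet]
  rcases neighborSet_switch_eq_or hab hcd hac hbd hac' hbd' v with h | ⟨x, hx, y, -, h⟩
  · rw [h]
  · exact iff_of_true (h ▸ Set.insert_nonempty _ _) ⟨x, hx⟩

end Switch

lemma Reachable.switch {z : V} (hu : G.Reachable u z) (hac : a ≠ c) (hbd : b ≠ d)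
    (hcd : (G.deleteEdges {s(a, b), s(c, d)}).Reachable c d) (hz : z ∈ s(a, b) ∨ z ∈ s(c, d)) :
    (G.switch a b c d).Reachable u a := by
  have hle : G.deleteEdges {s(a, b), s(c, d)} ≤ G.switch a b c d := le_sup_left
  have hca : (G.switch a b c d).Reachable c a := (switch_adj_left hac).reachable.symm
  have hda : (G.switch a b c d).Reachable d a := (hcd.mono hle).symm.trans hca
  have hend : ∀ x, x ∈ s(a, b) ∨ x ∈ s(c, d) → (G.switch a b c d).Reachable x a := by
    rintro x (hx | hx) <;> rcases Sym2.mem_iff.mp hx with rfl | rfl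
    exacts [.rfl, (switch_adj_right hbd).reachable.trans hda, hca, hda]
  obtain ⟨p⟩ := hu
  rcases p.reachable_deleteEdges_or {s(a, b), s(c, d)} with h | ⟨e, he, z', hz', h⟩
  · exact (h.mono hle).trans (hend z hz)
  · refine (h.mono hle).trans (hend z' ?_)
    rcases he with rfl | rfl
    exacts [Or.inl hz', Or.inr hz']

end SimpleGraph

open SimpleGraph

lemma TwoRegularOn.sup {V : Type*} {G H : SimpleGraph V} (hGH : Disjoint G.support H.support)
    (hG : TwoRegularOn G) (hH : TwoRegularOn H) : TwoRegularOn (G ⊔ H) := by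
  intro v hv
  rcases (support_sup G H ▸ hv : v ∈ G.support ∪ H.support) with hv | hv
  · rw [neighborSet_sup_of_notMem_support (Set.disjoint_left.mp hGH hv)]
    exact hG v hv
  · rw [sup_comm, neighborSet_sup_of_notMem_support (Set.disjoint_right.mp hGH hv)]
    exact hH v hv

lemma TwoRegularOn.switch {V : Type*} {G : SimpleGraph V} {a b c d : V} (hG : TwoRegularOn G)
    (hab : G.Adj a b) (hcd : G.Adj c d) (hac : ¬G.Adj a c) (hbd : ¬G.Adj b d)
    (hac' : a ≠ c) (hbd' : b ≠ d) : TwoRegularOn (G.switch a b c d) := by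
  intro v hv
  rw [ncard_neighborSet_switch hab hcd hac hbd hac' hbd']
  exact hG v (support_switch hab hcd hac hbd hac' hbd' ▸ hv)

theorem stmt_10 {V : Type*} (C₁ C₂ : SimpleGraph V)
    (hdisj : Disjoint C₁.support C₂.support)
    (hC₁conn : ConnectedOn C₁) (hC₁reg : TwoRegularOn C₁)
    (hC₂ : IsFiniteCycleGraph C₂)
    (a b c d : V) (he₁ : C₁.Adj a b) (he₂ : C₂.Adj c d)
    (hac : a ≠ c) (hbd : b ≠ d)
    (hnew₁ : ¬ (C₁ ⊔ C₂).Adj a c) (hnew₂ : ¬ (C₁ ⊔ C₂).Adj b d) :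
    ∀ G' : SimpleGraph V,
      G' = ((C₁ ⊔ C₂).deleteEdges {s(a, b), s(c, d)}) ⊔
            SimpleGraph.fromEdgeSet {s(a, c), s(b, d)} →
      G'.support = C₁.support ∪ C₂.support ∧ ConnectedOn G' ∧ TwoRegularOn G' := by
  rintro G' rfl
  obtain ⟨-, hC₂fin, hC₂conn, hC₂reg⟩ := hC₂
  change ((C₁ ⊔ C₂).switch a b c d).support = _ ∧ ConnectedOn ((C₁ ⊔ C₂).switch a b c d) ∧
    TwoRegularOn ((C₁ ⊔ C₂).switch a b c d)
  have hab : (C₁ ⊔ C₂).Adj a b := Or.inl he₁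
  have hcd : (C₁ ⊔ C₂).Adj c d := Or.inr he₂
  have hsupp : ((C₁ ⊔ C₂).switch a b c d).support = C₁.support ∪ C₂.support :=
    (support_switch hab hcd hnew₁ hnew₂ hac hbd).trans (support_sup C₁ C₂)
  have hcd' : ((C₁ ⊔ C₂).deleteEdges {s(a, b), s(c, d)}).Reachable c d :=
    ((isCycles_iff_twoRegularOn.mpr hC₂reg).reachable_deleteEdges_of_finite_support hC₂fin
      he₂).mono (deleteEdges_le_sup_deleteEdges (Set.disjoint_left.mp hdisj he₁.mem_support_left))
  have hreach : ∀ v ∈ C₁.support ∪ C₂.support, ((C₁ ⊔ C₂).switch a b c d).Reachable v a := by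
    rintro v (hv | hv)
    · exact ((hC₁conn v hv a he₁.mem_support_left).mono le_sup_left).switch hac hbd hcd'
        (Or.inl (Sym2.mem_mk_left a b))
    · exact ((hC₂conn v hv c he₂.mem_support_left).mono le_sup_right).switch hac hbd hcd'
        (Or.inr (Sym2.mem_mk_left c d))
  refine ⟨hsupp, fun u hu v hv => ?_,
    (hC₁reg.sup hdisj hC₂reg).switch hab hcd hnew₁ hnew₂ hac hbd⟩
  rw [hsupp] at hu hv
  exact (hreach u hu).trans (hreach v hv).symm
end

section
/- Every Cayley graph of a countably infinite abelian group with respect to a finite generating set contains a Hamiltonian path or double-ray; in particular, for Γ = ℤ with generating set {1}, the Cayley graph is itself a Hamiltonian double-ray. -/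
/-- The Cayley graph of an additive abelian group with connection set `S`. -/
def cayley (Γ : Type*) [AddCommGroup Γ] (S : Set Γ) : SimpleGraph Γ :=
  SimpleGraph.fromRel (fun x y => ∃ g ∈ S, y = x + g)

/-- A Hamiltonian (spanning) double-ray: the vertex set is infinite and the graph is
connected and 2-regular. -/
def IsHamDoubleRay {V : Type*} (H : SimpleGraph V) : Prop :=
  Infinite V ∧ H.Connected ∧ ∀ v : V, (H.neighborSet v).ncard = 2

/-
Induct on the generating set. If the subgroup `K` generated by `S` is enumerated along a path
or a double ray `p` of its Cayley graph, and `s` is a new generator, then `K + ℤ s` is the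
bijective image of a grid `I × B` under `(a, b) ↦ p a + b • s`, where `B` is `[0, m)` if `m` is
the order of `s` modulo `K` and `ℤ` if that order is infinite. Unit grid steps go to edges of the
Cayley graph, so a Hamiltonian path or double ray of the grid (a boustrophedon when one factor is
finite, a spiral through the plane otherwise) transports to one of `K + ℤ s`. For an infinite
group generated by `S` the final enumeration must be indexed by all of `ℤ`: a double ray.
-/

open Set SimpleGraph

lemma cayley_adj {Γ : Type*} [AddCommGroup Γ] {S : Set Γ} {x y : Γ} :
    (cayley Γ S).Adj x y ↔ x ≠ y ∧ (y - x ∈ S ∨ x - y ∈ S) := by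
  simp [cayley, ← sub_eq_iff_eq_add']

lemma hasse_int_adj {a b : ℤ} : (hasse ℤ).Adj a b ↔ b = a + 1 ∨ a = b + 1 := by
  simp only [hasse_adj, Order.covBy_iff_add_one_eq]
  omega

lemma cayley_int_one : cayley ℤ {1} = hasse ℤ := by
  ext a b
  rw [cayley_adj, hasse_int_adj]
  simp only [mem_singleton_iff]
  omega

lemma IsHamDoubleRay.of_iso {V W : Type*} {G : SimpleGraph V} {H : SimpleGraph W} (e : G ≃g H)
    (h : IsHamDoubleRay H) : IsHamDoubleRay G := by
  obtain ⟨hinf, hconn, hdeg⟩ := h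
  refine ⟨e.toEquiv.infinite_iff.2 hinf, e.connected_iff.2 hconn, fun v ↦ ?_⟩
  rw [← hdeg (e v), ← e.image_neighborSet, ncard_image_of_injective _ e.injective]

lemma isHamDoubleRay_hasse_int : IsHamDoubleRay (hasse ℤ) := by
  refine ⟨inferInstance, ⟨hasse_preconnected_of_succ ℤ⟩, fun n ↦ ?_⟩
  have : (hasse ℤ).neighborSet n = {n - 1, n + 1} := by
    ext m
    simp only [mem_neighborSet, hasse_int_adj, mem_insert_iff, mem_singleton_iff]
    omega
  rw [this, ncard_pair (by omega)]

section HamPath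

variable {V W : Type*}

/-- A Hamiltonian path (`I = Ico 0 n`) or double ray (`I = univ`) of `G` induced on `T`. -/
def IsHamPathOn (G : SimpleGraph V) (I : Set ℤ) (T : Set V) (f : ℤ → V) : Prop :=
  BijOn f I T ∧ ∀ i ∈ I, i + 1 ∈ I → G.Adj (f i) (f (i + 1))

def IsIcoOrUniv (I : Set ℤ) : Prop :=
  I = univ ∨ ∃ n, 0 < n ∧ I = Ico 0 n

lemma IsIcoOrUniv.eq_univ {I : Set ℤ} (hI : IsIcoOrUniv I) (h : I.Infinite) : I = univ := by
  obtain hI | ⟨n, -, rfl⟩ := hI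
  · exact hI
  · exact absurd (finite_Ico 0 n) h

lemma IsHamPathOn.map {G : SimpleGraph V} {G' : SimpleGraph W} {I : Set ℤ} {R : Set V}
    {T : Set W} {g : ℤ → V} {ψ : V → W} (hg : IsHamPathOn G I R g) (hψ : BijOn ψ R T)
    (hadj : ∀ x ∈ R, ∀ y ∈ R, G.Adj x y → G'.Adj (ψ x) (ψ y)) :
    IsHamPathOn G' I T (ψ ∘ g) :=
  ⟨hψ.comp hg.1, fun i hi hi' ↦ hadj _ (hg.1.mapsTo hi) _ (hg.1.mapsTo hi') (hg.2 i hi hi')⟩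

lemma IsHamPathOn.join {G : SimpleGraph V} {A B : Set V} {f g : ℤ → V}
    (hf : IsHamPathOn G (Ici 0) A f) (hg : IsHamPathOn G (Ici 0) B g) (hAB : Disjoint A B)
    (h0 : G.Adj (g 0) (f 0)) :
    IsHamPathOn G univ (A ∪ B) (fun n ↦ if 0 ≤ n then f n else g (-1 - n)) := by
  have hf' : ∀ n, 0 ≤ n → f n ∈ A := fun n hn ↦ hf.1.mapsTo (mem_Ici.2 hn)
  have hg' : ∀ n, n < 0 → g (-1 - n) ∈ B := fun n hn ↦ hg.1.mapsTo (mem_Ici.2 (by omega))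
  refine ⟨⟨fun n _ ↦ ?_, fun n _ n' _ h ↦ ?_, fun x hx ↦ ?_⟩, fun n _ _ ↦ ?_⟩
  · dsimp only
    split_ifs with hn
    exacts [.inl (hf' n hn), .inr (hg' n (by omega))]
  · dsimp only at h
    split_ifs at h with hn hn' hn'
    · exact hf.1.injOn hn hn' h
    · exact absurd h (hAB.ne_of_mem (hf' n hn) (hg' n' (by omega)))
    · exact absurd h.symm (hAB.ne_of_mem (hf' n' hn') (hg' n (by omega)))
    · have := hg.1.injOn (mem_Ici.2 (by omega : (0 : ℤ) ≤ -1 - n)) (mem_Ici.2 (by omega)) h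
      omega
  · rcases hx with hx | hx
    · obtain ⟨n, hn, rfl⟩ := hf.1.surjOn hx
      exact ⟨n, trivial, if_pos hn⟩
    · obtain ⟨n, hn, rfl⟩ := hg.1.surjOn hx
      refine ⟨-1 - n, trivial, ?_⟩
      simp only [mem_Ici] at hn
      dsimp only
      rw [if_neg (by omega), sub_sub_cancel]
  · dsimp only
    rcases lt_trichotomy n (-1) with hn | rfl | hn
    · rw [if_neg (by omega), if_neg (by omega)]
      have := hg.2 (-1 - (n + 1)) (mem_Ici.2 (by omega)) (mem_Ici.2 (by omega))
      rw [show -1 - (n + 1) + 1 = -1 - n by ring] at this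
      exact this.symm
    · simpa using h0
    · rw [if_pos (by omega), if_pos (by omega)]
      exact hf.2 n (mem_Ici.2 (by omega)) (mem_Ici.2 (by omega))

lemma IsHamPathOn.exists_le_isHamDoubleRay {G : SimpleGraph V} {f : ℤ → V}
    (hf : IsHamPathOn G univ univ f) : ∃ H ≤ G, IsHamDoubleRay H := by
  let e := Equiv.ofBijective f (bijOn_univ.1 hf.1)
  refine ⟨(hasse ℤ).map e.toEmbedding, ?_,
    IsHamDoubleRay.of_iso (Iso.map e (hasse ℤ)).symm isHamDoubleRay_hasse_int⟩
  rw [map_le_iff_le_comap]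
  intro a b hab
  rcases hasse_int_adj.1 hab with rfl | rfl
  · exact hf.2 a trivial trivial
  · exact (hf.2 b trivial trivial).symm

end HamPath

lemma grid_adj {x y : ℤ × ℤ} : (hasse ℤ □ hasse ℤ).Adj x y ↔
    (x.1 = y.1 ∧ (y.2 = x.2 + 1 ∨ x.2 = y.2 + 1)) ∨
      (x.2 = y.2 ∧ (y.1 = x.1 + 1 ∨ x.1 = y.1 + 1)) := by
  rw [boxProd_adj, hasse_int_adj, hasse_int_adj]
  omega

section Zigzag

variable {m : ℤ}

/-- Boustrophedon through the strip `ℤ × [0, m)`: index `k` lies in column `k / m`, which is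
climbed in even columns and descended in odd ones. -/
def zigzag (m k : ℤ) : ℤ × ℤ :=
  (k / m, if k / m % 2 = 0 then k % m else m - 1 - k % m)

def unzigzag (m : ℤ) (x : ℤ × ℤ) : ℤ :=
  x.1 * m + if x.1 % 2 = 0 then x.2 else m - 1 - x.2

lemma zigzag_bijOn (hm : 0 < m) : BijOn (zigzag m) univ (univ ×ˢ Ico 0 m) := by
  refine InvOn.bijOn (f' := unzigzag m) ⟨fun k _ ↦ ?_, fun x hx ↦ ?_⟩ (fun k _ ↦ ?_)
    (mapsTo_univ _ _)
  · obtain ⟨hk, -, -⟩ := (Int.ediv_emod_unique (a := k) hm).1 ⟨rfl, rfl⟩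
    simp only [unzigzag, zigzag]
    split_ifs <;> linarith
  · obtain ⟨c, r⟩ := x
    obtain ⟨-, hr0, hrm⟩ : c ∈ univ ∧ 0 ≤ r ∧ r < m := hx
    set r' := if c % 2 = 0 then r else m - 1 - r with hr'
    have hr'0 : 0 ≤ r' ∧ r' < m := by rw [hr']; split_ifs <;> omega
    obtain ⟨hq, hr⟩ :=
      (Int.ediv_emod_unique hm).2 ⟨(by ring : r' + m * c = c * m + r'), hr'0⟩
    simp only [unzigzag, zigzag, ← hr', hq, hr, Prod.mk.injEq, true_and]
    split_ifs <;> omega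
  · have h0 := Int.emod_nonneg k hm.ne'
    have h1 := Int.emod_lt_of_pos k hm
    simp only [zigzag, mem_prod, mem_univ, mem_Ico, true_and]
    split_ifs <;> omega

lemma zigzag_adj (hm : 0 < m) (k : ℤ) :
    (hasse ℤ □ hasse ℤ).Adj (zigzag m k) (zigzag m (k + 1)) := by
  obtain ⟨hk, h0, h1⟩ := (Int.ediv_emod_unique (a := k) hm).1 ⟨rfl, rfl⟩
  have hstep : ((k + 1) / m = k / m ∧ (k + 1) % m = k % m + 1) ∨
      (k % m = m - 1 ∧ (k + 1) / m = k / m + 1 ∧ (k + 1) % m = 0) := by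
    by_cases h : k % m + 1 < m
    · exact .inl ((Int.ediv_emod_unique hm).2 ⟨by linarith, by omega, h⟩)
    · exact .inr ⟨by omega, (Int.ediv_emod_unique hm).2 ⟨by linarith, le_rfl, hm⟩⟩
  rw [grid_adj]
  simp only [zigzag]
  rcases hstep with ⟨hq, hr⟩ | ⟨hlast, hq, hr⟩ <;> rw [hq, hr] <;> split_ifs <;> omega

lemma isHamPathOn_zigzag (hm : 0 < m) :
    IsHamPathOn (hasse ℤ □ hasse ℤ) univ (univ ×ˢ Ico 0 m) (zigzag m) :=
  ⟨zigzag_bijOn hm, fun k _ _ ↦ zigzag_adj hm k⟩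

lemma isHamPathOn_zigzag_Ico (hm : 0 < m) (n : ℤ) :
    IsHamPathOn (hasse ℤ □ hasse ℤ) (Ico 0 (n * m)) (Ico 0 n ×ˢ Ico 0 m) (zigzag m) := by
  refine ⟨?_, fun k _ _ ↦ zigzag_adj hm k⟩
  have hfst : ∀ k, (zigzag m k).1 ∈ Ico 0 n ↔ k ∈ Ico 0 (n * m) := fun k ↦ by
    obtain ⟨hk, h0, h1⟩ := (Int.ediv_emod_unique (a := k) hm).1 ⟨rfl, rfl⟩
    simp only [zigzag, mem_Ico]
    constructor
    · rintro ⟨ha, hb⟩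
      constructor <;> nlinarith
    · rintro ⟨ha, hb⟩
      constructor <;> by_contra! <;> nlinarith
  have h := (zigzag_bijOn hm).inter_mapsTo (s₂ := Ico 0 (n * m)) (t₂ := Ico 0 n ×ˢ univ)
    (fun k hk ↦ ⟨(hfst k).2 hk, trivial⟩) (fun k hk ↦ (hfst k).1 hk.2.1)
  rwa [univ_inter, prod_inter_prod, univ_inter, inter_univ] at h

end Zigzag

section Spiral

def shellOf (p : ℤ × ℤ) : ℤ := max (max p.1 (-p.1)) p.2

/-- The shell `max |x| y = t` of the upper half plane, walked from `(-t, 0)` up, across and down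
to `(t, 0)` as `o` runs over `[0, 4t]`; odd shells are mirrored, so that each shell ends next to
the start of the following one. -/
def shellPath (t o : ℤ) : ℤ × ℤ :=
  let p : ℤ × ℤ :=
    if o ≤ t then (-t, o) else if o ≤ 3 * t then (o - 2 * t, t) else (t, 4 * t - o)
  if t % 2 = 0 then p else (-p.1, p.2)

lemma isHamPathOn_shellPath {t : ℤ} (ht : 0 ≤ t) :
    IsHamPathOn (hasse ℤ □ hasse ℤ) (Icc 0 (4 * t)) {p | 0 ≤ p.2 ∧ shellOf p = t}
      (shellPath t) := by
  refine ⟨⟨fun o ho ↦ ?_, fun o ho o' ho' h ↦ ?_, fun p hp ↦ ?_⟩, fun o ho _ ↦ ?_⟩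
  · simp only [mem_Icc] at ho
    simp only [shellPath, shellOf, mem_ofPred]
    split_ifs <;> omega
  · simp only [mem_Icc] at ho ho'
    simp only [shellPath] at h
    split_ifs at h <;> simp only [Prod.mk.injEq] at h <;> omega
  · obtain ⟨x, y⟩ := p
    change 0 ≤ y ∧ max (max x (-x)) y = t at hp
    let x' := if t % 2 = 0 then x else -x
    refine ⟨if x' = -t then y else if y = t then x' + 2 * t else 4 * t - y, ?_, ?_⟩
    · simp only [mem_Icc, x']
      split_ifs <;> omega
    · simp only [shellPath, x']
      split_ifs <;> ext <;> simp only <;> omega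
  · simp only [mem_Icc] at ho
    rw [grid_adj]
    simp only [shellPath]
    split_ifs <;> omega

lemma shellPath_last_adj {t : ℤ} (ht : 0 ≤ t) :
    (hasse ℤ □ hasse ℤ).Adj (shellPath t (4 * t)) (shellPath (t + 1) 0) := by
  rw [grid_adj]
  simp only [shellPath]
  split_ifs <;> omega

/-- Shell `t` has `4t + 1` points, so it occupies the indices `[2t² - t, 2t² + 3t]`. -/
def shell (n : ℤ) : ℕ :=
  Nat.find (p := fun t : ℕ ↦ n < 2 * t * t + 3 * t + 1)
    ⟨n.toNat, by nlinarith [n.self_le_toNat]⟩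

lemma shell_spec {n : ℤ} (hn : 0 ≤ n) :
    2 * (shell n : ℤ) * shell n ≤ n + shell n ∧
      n < 2 * (shell n : ℤ) * shell n + 3 * shell n + 1 := by
  refine ⟨?_, Nat.find_spec (p := fun t : ℕ ↦ n < 2 * t * t + 3 * t + 1) _⟩
  cases h : shell n with
  | zero => simpa using hn
  | succ s =>
    have := Nat.find_min (p := fun t : ℕ ↦ n < 2 * t * t + 3 * t + 1) _
      (show s < shell n by omega)
    push_cast at this ⊢
    nlinarith

lemma shell_eq {n : ℤ} {t : ℕ} (h₁ : 2 * (t : ℤ) * t ≤ n + t)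
    (h₂ : n < 2 * (t : ℤ) * t + 3 * t + 1) :
    shell n = t := by
  rw [shell, Nat.find_eq_iff]
  refine ⟨h₂, fun t' ht' h ↦ ?_⟩
  have : (t' : ℤ) + 1 ≤ t := by exact_mod_cast ht'
  nlinarith

def halfSpiral (n : ℤ) : ℤ × ℤ :=
  shellPath (shell n) (n - (2 * shell n * shell n - shell n))

lemma isHamPathOn_halfSpiral :
    IsHamPathOn (hasse ℤ □ hasse ℤ) (Ici 0) {p | 0 ≤ p.2} halfSpiral := by
  have hoff : ∀ n ∈ Ici (0 : ℤ),
      n - (2 * shell n * shell n - shell n) ∈ Icc 0 (4 * (shell n : ℤ)) :=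
    fun n hn ↦ by have := shell_spec hn; constructor <;> linarith
  have hmem : ∀ n ∈ Ici (0 : ℤ),
      0 ≤ (halfSpiral n).2 ∧ shellOf (halfSpiral n) = shell n :=
    fun n hn ↦ (isHamPathOn_shellPath (Nat.cast_nonneg _)).1.mapsTo (hoff n hn)
  refine ⟨⟨fun n hn ↦ (hmem n hn).1, fun n hn n' hn' h ↦ ?_, fun p hp ↦ ?_⟩,
    fun n hn _ ↦ ?_⟩
  · have ht : shell n = shell n' := by
      have := (hmem n hn).2; rw [h, (hmem n' hn').2] at this; exact_mod_cast this.symm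
    rw [halfSpiral, halfSpiral, ht] at h
    have := (isHamPathOn_shellPath (Nat.cast_nonneg _)).1.injOn (ht ▸ hoff n hn) (hoff n' hn') h
    linarith
  · have ht : 0 ≤ shellOf p := le_trans hp (le_max_right _ _)
    obtain ⟨o, ho, hpo⟩ := (isHamPathOn_shellPath ht).1.surjOn ⟨hp, rfl⟩
    rw [← hpo]
    set t := shellOf p
    simp only [mem_Icc] at ho
    have hshell : shell (2 * t * t - t + o) = t.toNat := by
      apply shell_eq <;> rw [Int.toNat_of_nonneg ht] <;> linarith
    refine ⟨2 * t * t - t + o, by simp only [mem_Ici]; nlinarith [Int.le_self_sq t], ?_⟩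
    rw [halfSpiral, hshell, Int.toNat_of_nonneg ht]
    ring_nf
  · obtain ⟨h₁, h₂⟩ := shell_spec hn
    set t := shell n
    by_cases hlast : n + 1 < 2 * (t : ℤ) * t + 3 * t + 1
    · have hs : shell (n + 1) = t := shell_eq (by linarith) hlast
      have := (isHamPathOn_shellPath (Nat.cast_nonneg t)).2 _ (hoff n hn) (by
        simp only [mem_Icc]; constructor <;> linarith)
      rw [halfSpiral, halfSpiral, hs]
      convert this using 2
      ring
    · have hs : shell (n + 1) = t + 1 :=
        shell_eq (by push_cast; nlinarith) (by push_cast; nlinarith)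
      have := shellPath_last_adj (Nat.cast_nonneg t)
      rw [halfSpiral, halfSpiral, hs]
      convert this using 2 <;> push_cast <;> linarith

def spiral (n : ℤ) : ℤ × ℤ :=
  if 0 ≤ n then halfSpiral n else ((halfSpiral (-1 - n)).1, -1 - (halfSpiral (-1 - n)).2)

-- The lower half plane is walked backwards, as the mirror image of the upper one under
-- `y ↦ -1 - y`; the two halves meet at `(0, -1) ~ (0, 0)`.
lemma isHamPathOn_spiral : IsHamPathOn (hasse ℤ □ hasse ℤ) univ univ spiral := by
  let flip : ℤ × ℤ → ℤ × ℤ := fun p ↦ (p.1, -1 - p.2)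
  have hflip :
      IsHamPathOn (hasse ℤ □ hasse ℤ) (Ici 0) {p | p.2 < 0} (flip ∘ halfSpiral) := by
    refine isHamPathOn_halfSpiral.map
      ⟨fun p hp ↦ ?_, fun p _ q _ h ↦ ?_, fun p hp ↦ ?_⟩ ?_
    · change 0 ≤ p.2 at hp; change -1 - p.2 < 0; omega
    · simp only [flip, Prod.mk.injEq] at h; ext <;> omega
    · refine ⟨flip p, ?_, ?_⟩
      · change p.2 < 0 at hp; change 0 ≤ -1 - p.2; omega
      · simp only [flip]; ext <;> simp
    · intro p _ q _ h
      rw [grid_adj] at h ⊢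
      simp only [flip]
      omega
  have h00 : halfSpiral 0 = (0, 0) := by
    rw [halfSpiral, shell_eq (t := 0) (by norm_num) (by norm_num)]
    simp [shellPath]
  have := isHamPathOn_halfSpiral.join hflip
    (disjoint_left.2 fun p (hp : 0 ≤ p.2) (hp' : p.2 < 0) ↦ by omega) (by
      rw [grid_adj]
      simp [flip, h00])
  rwa [show {p : ℤ × ℤ | 0 ≤ p.2} ∪ {p | p.2 < 0} = univ by ext; simp; omega] at this

end Spiral

lemma exists_isHamPathOn_grid_prod {I B : Set ℤ} (hI : IsIcoOrUniv I) (hB : IsIcoOrUniv B) :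
    ∃ J g, IsIcoOrUniv J ∧ IsHamPathOn (hasse ℤ □ hasse ℤ) J (I ×ˢ B) g := by
  obtain rfl | ⟨n, hn, rfl⟩ := hI <;> obtain rfl | ⟨m, hm, rfl⟩ := hB
  · exact ⟨univ, spiral, .inl rfl, univ_prod_univ ▸ isHamPathOn_spiral⟩
  · exact ⟨univ, zigzag m, .inl rfl, isHamPathOn_zigzag hm⟩
  · refine ⟨univ, Prod.swap ∘ zigzag n, .inl rfl, (isHamPathOn_zigzag hn).map ?_ ?_⟩
    · rw [← image_swap_prod univ (Ico 0 n)]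
      exact Prod.swap_injective.injOn.bijOn_image
    · exact fun x _ y _ h ↦ (boxProdComm _ _).map_adj_iff.2 h
  · exact ⟨Ico 0 (n * m), zigzag m, .inr ⟨n * m, mul_pos hn hm, rfl⟩,
      isHamPathOn_zigzag_Ico hm n⟩

section Extension

variable {Γ : Type*} [AddCommGroup Γ]

lemma exists_zsmul_transversal (K : AddSubgroup Γ) (s : Γ) :
    ∃ B, IsIcoOrUniv B ∧ (∀ b ∈ B, ∀ b' ∈ B, (b - b') • s ∈ K → b = b') ∧
      ∀ k : ℤ, ∃ b ∈ B, (k - b) • s ∈ K := by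
  -- `{k | k • s ∈ K}` is a subgroup `aℤ` of `ℤ`; `B` is `[0, |a|)`, or `ℤ` if `a = 0`.
  obtain ⟨a, ha⟩ := Int.subgroup_cyclic (K.comap (zmultiplesHom Γ s))
  have hK : ∀ k : ℤ, k • s ∈ K ↔ |a| ∣ k := fun k ↦ by
    rw [abs_dvd, ← Int.mem_zmultiples_iff, AddSubgroup.zmultiples_eq_closure, ← ha,
      AddSubgroup.mem_comap, zmultiplesHom_apply]
  rcases eq_or_ne a 0 with rfl | ha0
  · refine ⟨univ, .inl rfl, fun b _ b' _ h ↦ ?_, fun k ↦ ⟨k, trivial, by simp⟩⟩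
    rw [hK, abs_zero, zero_dvd_iff, sub_eq_zero] at h
    exact h
  · have hpos : 0 < |a| := abs_pos.2 ha0
    refine ⟨Ico 0 |a|, .inr ⟨|a|, hpos, rfl⟩, fun b hb b' hb' h ↦ ?_, fun k ↦ ?_⟩
    · simp only [mem_Ico] at hb hb'
      exact sub_eq_zero.1 (Int.eq_zero_of_abs_lt_dvd ((hK _).1 h) (abs_sub_lt_iff.2 (by omega)))
    · refine ⟨k % |a|, ⟨Int.emod_nonneg k hpos.ne', Int.emod_lt_of_pos k hpos⟩,
        (hK _).2 ⟨k / |a|, by rw [Int.emod_def]; ring⟩⟩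

lemma bijOn_add_zsmul {K : AddSubgroup Γ} {s : Γ} {I B : Set ℤ} {p : ℤ → Γ}
    (hp : BijOn p I K) (hinj : ∀ b ∈ B, ∀ b' ∈ B, (b - b') • s ∈ K → b = b')
    (hsurj : ∀ k : ℤ, ∃ b ∈ B, (k - b) • s ∈ K) :
    BijOn (fun x : ℤ × ℤ ↦ p x.1 + x.2 • s) (I ×ˢ B)
      ↑(K ⊔ AddSubgroup.zmultiples s) := by
  refine ⟨fun x hx ↦ ?_, fun x hx y hy h ↦ ?_, fun z hz ↦ ?_⟩
  · exact AddSubgroup.add_mem_sup (hp.mapsTo hx.1) (AddSubgroup.zsmul_mem_zmultiples s x.2)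
  · replace h : p x.1 + x.2 • s = p y.1 + y.2 • s := h
    have h₂ : x.2 = y.2 := hinj _ hx.2 _ hy.2 <| by
      rw [sub_smul, show x.2 • s - y.2 • s = p y.1 - p x.1 by
        rw [sub_eq_sub_iff_add_eq_add, add_comm, h]]
      exact sub_mem (hp.mapsTo hy.1) (hp.mapsTo hx.1)
    have h₁ : x.1 = y.1 := hp.injOn hx.1 hy.1 (by simpa [h₂] using h)
    exact Prod.ext h₁ h₂
  · obtain ⟨y, hy, _, ⟨k, rfl⟩, rfl⟩ := AddSubgroup.mem_sup.1 hz
    obtain ⟨b, hb, hkb⟩ := hsurj k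
    obtain ⟨a, ha, hpa⟩ := hp.surjOn (add_mem hy hkb)
    refine ⟨(a, b), ⟨ha, hb⟩, ?_⟩
    simp only [hpa, sub_smul]
    abel

lemma IsHamPathOn.exists_extend {S : Set Γ} {K : AddSubgroup Γ} {I : Set ℤ} {p : ℤ → Γ}
    (hI : IsIcoOrUniv I) (hp : IsHamPathOn (cayley Γ S) I K p) (s : Γ) :
    ∃ J f, IsIcoOrUniv J ∧
      IsHamPathOn (cayley Γ (insert s S)) J ↑(K ⊔ AddSubgroup.zmultiples s) f := by
  obtain ⟨B, hB, hinj, hsurj⟩ := exists_zsmul_transversal K s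
  obtain ⟨J, g, hJ, hg⟩ := exists_isHamPathOn_grid_prod hI hB
  have hψ := bijOn_add_zsmul hp.1 hinj hsurj
  set ψ := fun x : ℤ × ℤ ↦ p x.1 + x.2 • s
  have hstep : ∀ x ∈ I ×ˢ B, ∀ y ∈ I ×ˢ B,
      (y.1 = x.1 ∧ y.2 = x.2 + 1) ∨ (y.2 = x.2 ∧ y.1 = x.1 + 1) →
        ψ y - ψ x ∈ insert s S ∨ ψ x - ψ y ∈ insert s S := by
    rintro x hx y hy (⟨h₁, h₂⟩ | ⟨h₂, h₁⟩)
    · left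
      simp only [ψ, h₁, h₂, add_smul, one_smul, add_sub_add_left_eq_sub, add_sub_cancel_left]
      exact mem_insert s S
    · have := (cayley_adj.1 (hp.2 x.1 hx.1 (h₁ ▸ hy.1))).2
      simp only [ψ, h₁, h₂, add_sub_add_right_eq_sub]
      exact this.imp (mem_insert_of_mem s) (mem_insert_of_mem s)
  refine ⟨J, ψ ∘ g, hJ, hg.map hψ fun x hx y hy hxy ↦
    cayley_adj.2 ⟨hψ.injOn.ne hx hy hxy.ne, ?_⟩⟩
  rw [grid_adj] at hxy
  rcases hxy with ⟨h₁, h₂ | h₂⟩ | ⟨h₂, h₁ | h₁⟩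
  · exact hstep x hx y hy (.inl ⟨h₁.symm, h₂⟩)
  · exact (hstep y hy x hx (.inl ⟨h₁, h₂⟩)).symm
  · exact hstep x hx y hy (.inr ⟨h₂.symm, h₁⟩)
  · exact (hstep y hy x hx (.inr ⟨h₂, h₁⟩)).symm

lemma closure_insert_eq_sup_zmultiples (s : Γ) (A : Set Γ) :
    AddSubgroup.closure (insert s A) = AddSubgroup.closure A ⊔ AddSubgroup.zmultiples s := by
  rw [insert_eq, AddSubgroup.closure_union, sup_comm, AddSubgroup.zmultiples_eq_closure]

lemma exists_isHamPathOn_closure (S : Finset Γ) :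
    ∃ I f, IsIcoOrUniv I ∧
      IsHamPathOn (cayley Γ S) I (AddSubgroup.closure (S : Set Γ)) f := by
  classical
  induction S using Finset.induction_on with
  | empty =>
    rw [Finset.coe_empty, AddSubgroup.closure_empty, AddSubgroup.coe_bot]
    refine ⟨Ico 0 1, 0, .inr ⟨1, one_pos, rfl⟩,
      ⟨fun _ _ ↦ rfl, fun i hi j hj _ ↦ ?_, ?_⟩, ?_⟩
    · simp only [mem_Ico] at hi hj; omega
    · rintro _ rfl; exact ⟨0, by simp, rfl⟩
    · intro i hi hi'; simp only [mem_Ico] at hi hi'; omega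
  | insert s S _ ih =>
    obtain ⟨I, p, hI, hp⟩ := ih
    rw [Finset.coe_insert, closure_insert_eq_sup_zmultiples]
    exact hp.exists_extend hI s

end Extension

theorem stmt_18 :
    (∀ (Γ : Type) [AddCommGroup Γ] [Countable Γ] [Infinite Γ] (S : Finset Γ),
      AddSubgroup.closure (S : Set Γ) = ⊤ →
        ∃ H : SimpleGraph Γ, H ≤ cayley Γ (S : Set Γ) ∧ IsHamDoubleRay H) ∧
    IsHamDoubleRay (cayley ℤ ({1} : Set ℤ)) := by
  refine ⟨fun Γ _ _ _ S hS ↦ ?_, cayley_int_one ▸ isHamDoubleRay_hasse_int⟩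
  obtain ⟨I, f, hI, hf⟩ := exists_isHamPathOn_closure S
  rw [hS, AddSubgroup.coe_top] at hf
  obtain rfl := hI.eq_univ (Infinite.of_image f (hf.1.image_eq ▸ infinite_univ))
  exact hf.exists_le_isHamDoubleRay
end
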